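/- arXiv:2112.08975 — 2 statements merged into one kernel-verified Lean document; each statement's English description precedes it below -/
import Mathlib

section
/- Let 1 < g₀ ≤ g⁰ and let H : (0,∞) → (0,∞) be a differentiable strictly increasing bijection of (0,∞) onto (0,∞) with 1/g⁰ ≤ t·H′(t)/H(t) ≤ 1/g₀ for all t > 0. Let 0 < α < 1/g⁰ and define K(t) = t^{−α}·H(t). Then K is a strictly increasing bijection of (0,∞) onto (0,∞), its inverse Ψ = K⁻¹ is differentiable, and Ψ satisfies 1/(1/g₀ − α) ≤ s·Ψ′(s)/Ψ(s) ≤ 1/(1/g⁰ − α) for all s > 0. -/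
/-!
The elasticity `t K'(t) / K(t)` of `K = t^(-α) H` is `t H'(t) / H(t) - α`, which lies in
`[1/g⁰ - α, 1/g₀ - α]` and in particular is at least `e = 1/g⁰ - α > 0`. Hence `K' > 0`, and
`K(u) / u^e` is nondecreasing, so `K(u) ≤ u^e K(1)` for `u ≤ 1` and `K(u) ≥ u^e K(1)` for `u ≥ 1`:
by the intermediate value theorem `K` maps `(0,∞)` onto itself. The monotone inverse `Ψ` is
continuous, so `Ψ'(K t) = 1 / K'(t)`, and the elasticity of `Ψ` at `K t` is the reciprocal of that
of `K` at `t`.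
-/

open Set Filter Topology

theorem hasDerivAt_rpow_mul {f : ℝ → ℝ} {f' t : ℝ} (β : ℝ) (hf : HasDerivAt f f' t) (ht : 0 < t) :
    HasDerivAt (fun u => u ^ β * f u) (t ^ (β - 1) * (β * f t + t * f')) t := by
  refine ((Real.hasDerivAt_rpow_const (p := β) (Or.inl ht.ne')).mul hf).congr_deriv ?_
  rw [Real.rpow_sub_one ht.ne']
  field_simp

theorem elasticity_rpow_mul {t a b : ℝ} (β : ℝ) (ht : 0 < t) (ha : a ≠ 0) :
    t * (t ^ (β - 1) * (β * a + t * b)) / (t ^ β * a) = β + t * b / a := by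
  rw [Real.rpow_sub_one ht.ne']
  field_simp

section Elasticity

variable {f f' : ℝ → ℝ} {e : ℝ}

theorem monotoneOn_div_rpow_of_le_elasticity (hf : ∀ t > 0, HasDerivAt f (f' t) t)
    (hpos : ∀ t > 0, 0 < f t) (hel : ∀ t > 0, e ≤ t * f' t / f t) :
    MonotoneOn (fun u => f u / u ^ e) (Ioi 0) := by
  have hderiv (t : ℝ) (ht : 0 < t) :
      HasDerivAt (fun u => u ^ (-e) * f u) (t ^ (-e - 1) * (-e * f t + t * f' t)) t :=
    hasDerivAt_rpow_mul (-e) (hf t ht) ht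
  have hmono : MonotoneOn (fun u => u ^ (-e) * f u) (Ioi 0) := by
    refine monotoneOn_of_hasDerivWithinAt_nonneg (convex_Ioi 0)
      (fun t ht => (hderiv t ht).continuousAt.continuousWithinAt)
      (fun t ht => (hderiv t (interior_subset ht)).hasDerivWithinAt) fun t ht => ?_
    rw [interior_Ioi] at ht
    have hlin := (le_div_iff₀ (hpos t ht)).mp (hel t ht)
    exact mul_nonneg (Real.rpow_pos_of_pos ht _).le (by linarith)
  refine hmono.congr fun u hu => ?_
  simp only [Real.rpow_neg hu.le, div_eq_inv_mul]

theorem strictMonoOn_of_pos_le_elasticity (he : 0 < e) (hf : ∀ t > 0, HasDerivAt f (f' t) t)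
    (hpos : ∀ t > 0, 0 < f t) (hel : ∀ t > 0, e ≤ t * f' t / f t) :
    StrictMonoOn f (Ioi 0) := by
  refine strictMonoOn_of_hasDerivWithinAt_pos (convex_Ioi 0)
    (fun t ht => (hf t ht).continuousAt.continuousWithinAt)
    (fun t ht => (hf t (interior_subset ht)).hasDerivWithinAt) fun t ht => ?_
  rw [interior_Ioi] at ht
  have hel_pos : 0 < t * f' t / f t := he.trans_le (hel t ht)
  exact pos_of_mul_pos_right ((div_pos_iff_of_pos_right (hpos t ht)).mp hel_pos) ht.le

theorem surjOn_Ioi_of_monotoneOn_div_rpow (he : 0 < e) (hcont : ContinuousOn f (Ioi 0))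
    (hf1 : 0 < f 1) (hmono : MonotoneOn (fun u => f u / u ^ e) (Ioi 0)) :
    SurjOn f (Ioi 0) (Ioi 0) := by
  have hlow (u : ℝ) (hu : 0 < u) (hu1 : u ≤ 1) : f u ≤ u ^ e * f 1 := by
    have := hmono hu (mem_Ioi.2 one_pos) hu1
    simp only [Real.one_rpow, div_one] at this
    rwa [div_le_iff₀ (Real.rpow_pos_of_pos hu e), mul_comm] at this
  have hup (u : ℝ) (hu1 : 1 ≤ u) : u ^ e * f 1 ≤ f u := by
    have hu : 0 < u := one_pos.trans_le hu1
    have := hmono (mem_Ioi.2 one_pos) hu hu1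
    simp only [Real.one_rpow, div_one] at this
    rwa [le_div_iff₀ (Real.rpow_pos_of_pos hu e), mul_comm] at this
  intro y hy
  set c := (y / f 1) ^ e⁻¹
  have hc : 0 < c := Real.rpow_pos_of_pos (div_pos hy hf1) _
  have hcy : c ^ e * f 1 = y := by
    rw [← Real.rpow_mul (div_pos hy hf1).le, inv_mul_cancel₀ he.ne', Real.rpow_one,
      div_mul_cancel₀ _ hf1.ne']
  have ha : 0 < min 1 c := lt_min one_pos hc
  have hfa : f (min 1 c) ≤ y := calc
    f (min 1 c) ≤ (min 1 c) ^ e * f 1 := hlow _ ha (min_le_left _ _)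
    _ ≤ c ^ e * f 1 := by gcongr; exact min_le_right _ _
    _ = y := hcy
  have hfb : y ≤ f (max 1 c) := calc
    y = c ^ e * f 1 := hcy.symm
    _ ≤ (max 1 c) ^ e * f 1 := by gcongr; exact le_max_right _ _
    _ ≤ f (max 1 c) := hup _ (le_max_left _ _)
  obtain ⟨t, ht, hft⟩ := intermediate_value_Icc min_le_max
    (hcont.mono fun x hx => ha.trans_le hx.1) ⟨hfa, hfb⟩
  exact ⟨t, ha.trans_le ht.1, hft⟩

theorem bijOn_Ioi_of_pos_le_elasticity (he : 0 < e) (hf : ∀ t > 0, HasDerivAt f (f' t) t)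
    (hpos : ∀ t > 0, 0 < f t) (hel : ∀ t > 0, e ≤ t * f' t / f t) :
    BijOn f (Ioi 0) (Ioi 0) :=
  ⟨fun t ht => hpos t ht, (strictMonoOn_of_pos_le_elasticity he hf hpos hel).injOn,
    surjOn_Ioi_of_monotoneOn_div_rpow he (fun t ht => (hf t ht).continuousAt.continuousWithinAt)
      (hpos 1 one_pos) (monotoneOn_div_rpow_of_le_elasticity hf hpos hel)⟩

end Elasticity

theorem MonotoneOn.hasDerivAt_of_invOn {f g : ℝ → ℝ} {S T : Set ℝ} {y f' : ℝ}
    (hf : MonotoneOn f S) (hS : IsOpen S) (hT : T ∈ 𝓝 y) (hbij : BijOn f S T)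
    (hinv : InvOn g f S T) (hd : HasDerivAt f f' (g y)) (hf' : f' ≠ 0) :
    HasDerivAt g f'⁻¹ y := by
  have hgm : MapsTo g T S := hinv.1.mapsTo hbij.surjOn
  have himage : g '' T = S := (hinv.symm.bijOn hgm hbij.mapsTo).image_eq
  have hcont : ContinuousAt g y :=
    continuousAt_of_monotoneOn_of_image_mem_nhds
      (Function.monotoneOn_of_rightInvOn_of_mapsTo hf hinv.2 hgm) hT
      (himage ▸ hS.mem_nhds (hgm (mem_of_mem_nhds hT)))
  exact hd.of_local_left_inverse hcont hf' (eventually_of_mem hT fun z hz => hinv.2 hz)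

theorem stmt_12_general (g₀ gS : ℝ)
    (H H' : ℝ → ℝ)
    (hpos : ∀ t > (0:ℝ), 0 < H t)
    (hderiv : ∀ t > (0:ℝ), HasDerivAt H (H' t) t)
    (hSC : ∀ t > (0:ℝ), 1 / gS ≤ t * H' t / H t ∧ t * H' t / H t ≤ 1 / g₀)
    (α : ℝ) (hαlt : α < 1 / gS)
    (K : ℝ → ℝ) (hK : ∀ t > (0:ℝ), K t = t ^ (-α) * H t) :
    StrictMonoOn K (Set.Ioi 0) ∧ Set.BijOn K (Set.Ioi 0) (Set.Ioi 0) ∧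
      ∀ Ψ : ℝ → ℝ, (∀ t > (0:ℝ), Ψ (K t) = t) → (∀ s > (0:ℝ), K (Ψ s) = s) →
        ∀ s > (0:ℝ), ∃ d : ℝ, HasDerivAt Ψ d s ∧
          1 / (1 / g₀ - α) ≤ s * d / Ψ s ∧ s * d / Ψ s ≤ 1 / (1 / gS - α) := by
  set K' : ℝ → ℝ := fun t => t ^ (-α - 1) * (-α * H t + t * H' t)
  have hKd (t : ℝ) (ht : 0 < t) : HasDerivAt K (K' t) t :=
    (hasDerivAt_rpow_mul (-α) (hderiv t ht) ht).congr_of_eventuallyEq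
      (eventually_of_mem (Ioi_mem_nhds ht) hK)
  have hKpos (t : ℝ) (ht : 0 < t) : 0 < K t :=
    hK t ht ▸ mul_pos (Real.rpow_pos_of_pos ht _) (hpos t ht)
  have hKel (t : ℝ) (ht : 0 < t) : t * K' t / K t = -α + t * H' t / H t := by
    rw [hK t ht]; exact elasticity_rpow_mul (-α) ht (hpos t ht).ne'
  have he : 0 < 1 / gS - α := sub_pos.2 hαlt
  have hKlow (t : ℝ) (ht : 0 < t) : 1 / gS - α ≤ t * K' t / K t := by
    rw [hKel t ht]; linarith [(hSC t ht).1]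
  have hmono := strictMonoOn_of_pos_le_elasticity he hKd hKpos hKlow
  have hbij := bijOn_Ioi_of_pos_le_elasticity he hKd hKpos hKlow
  refine ⟨hmono, hbij, fun Ψ hΨK hKΨ s hs => ?_⟩
  obtain ⟨t, ht, rfl⟩ := hbij.surjOn hs
  have hKel_pos : 0 < t * K' t / K t := he.trans_le (hKlow t ht)
  have hK'ne : K' t ≠ 0 := by rintro h; simp [h] at hKel_pos
  have hΨd : HasDerivAt Ψ (K' t)⁻¹ (K t) :=
    hmono.monotoneOn.hasDerivAt_of_invOn isOpen_Ioi (Ioi_mem_nhds hs) hbij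
      ⟨fun t ht => hΨK t ht, fun s hs => hKΨ s hs⟩ (by rw [hΨK t ht]; exact hKd t ht) hK'ne
  have hΨel : K t * (K' t)⁻¹ / Ψ (K t) = 1 / (t * K' t / K t) := by
    rw [hΨK t ht]; field_simp
  refine ⟨(K' t)⁻¹, hΨd, ?_, ?_⟩ <;> rw [hΨel]
  · exact one_div_le_one_div_of_le hKel_pos (by rw [hKel t ht]; linarith [(hSC t ht).2])
  · exact one_div_le_one_div_of_le he (hKlow t ht)

/-- if `H : (0,∞) → (0,∞)` is a differentiable strictly increasing
bijection with `1/g⁰ ≤ t·H′(t)/H(t) ≤ 1/g₀` on `(0,∞)`, `0 < α < 1/g⁰`, and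
`K(t) = t^{−α}·H(t)`, then `K` is a strictly increasing bijection of `(0,∞)`
onto itself, its inverse `Ψ` is differentiable, and
`1/(1/g₀ − α) ≤ s·Ψ′(s)/Ψ(s) ≤ 1/(1/g⁰ − α)` for all `s > 0`. -/
theorem stmt_12 (g₀ gS : ℝ) (hg₀ : 1 < g₀) (hle : g₀ ≤ gS)
    (H H' : ℝ → ℝ)
    (hpos : ∀ t > (0:ℝ), 0 < H t)
    (hmono : StrictMonoOn H (Set.Ioi 0))
    (hbij : Set.BijOn H (Set.Ioi 0) (Set.Ioi 0))
    (hderiv : ∀ t > (0:ℝ), HasDerivAt H (H' t) t)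
    (hSC : ∀ t > (0:ℝ), 1 / gS ≤ t * H' t / H t ∧ t * H' t / H t ≤ 1 / g₀)
    (α : ℝ) (hα0 : 0 < α) (hαlt : α < 1 / gS)
    (K : ℝ → ℝ) (hK : ∀ t > (0:ℝ), K t = t ^ (-α) * H t) :
    StrictMonoOn K (Set.Ioi 0) ∧ Set.BijOn K (Set.Ioi 0) (Set.Ioi 0) ∧
      ∀ Ψ : ℝ → ℝ, (∀ t > (0:ℝ), Ψ (K t) = t) → (∀ s > (0:ℝ), K (Ψ s) = s) →
        ∀ s > (0:ℝ), ∃ d : ℝ, HasDerivAt Ψ d s ∧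
          1 / (1 / g₀ - α) ≤ s * d / Ψ s ∧ s * d / Ψ s ≤ 1 / (1 / gS - α) :=
  stmt_12_general g₀ gS H H' hpos hderiv hSC α hαlt K hK
end

section
/- Let g be a density satisfying (SC) with constants 1 < g₀ ≤ g⁰, let N ≥ 1, and for ξ ∈ ℝ^N define a(ξ) = (g(‖ξ‖)/‖ξ‖)·ξ for ξ ≠ 0 and a(0) = 0. Then for all ξ, η ∈ ℝ^N with ξ ≠ η, writing θ_t = t·ξ + (1−t)·η, one has ⟨a(ξ) − a(η), ξ − η⟩ ≥ min(1, g₀ − 1)·‖ξ − η‖²·∫₀¹ (g(‖θ_t‖)/‖θ_t‖) dt, where the integrand (defined for all but at most one t ∈ [0,1]) is integrable. -/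
/-!
Along the segment `γ t = t • ξ + (1 - t) • η` put `F t = ⟪a (γ t), ξ - η⟫`, so that
`⟪a ξ - a η, ξ - η⟫ = F 1 - F 0`. Wherever `γ t ≠ 0` (all `t` but at most one),
`F' t = ⟪Da(γ t) v, v⟫` with `v = ξ - η`, and (SC) together with Cauchy–Schwarz bounds it below by
`min 1 (g₀ - 1) * ‖v‖ ^ 2 * g ‖γ t‖ / ‖γ t‖ ≥ 0`. A nonnegative derivative is automatically
integrable; this gives the integrability of the weight and, integrating `F'`, the inequality.
`F` stays continuous at the zero of `γ` because (SC) forces `g t ≤ g 1 * t ^ (g₀ - 1)` near `0`.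
-/

/-- A density `g` (with derivative `g'` on `(0,∞)`) satisfying the structural
condition (SC) with constants `1 < g₀ ≤ g⁰`. -/
def IsDensitySC (g g' : ℝ → ℝ) (p q : ℝ) : Prop :=
  g 0 = 0 ∧ (∀ t > (0:ℝ), 0 < g t) ∧ (∀ t > (0:ℝ), HasDerivAt g (g' t) t) ∧
  ContinuousOn g' (Set.Ioi 0) ∧
  (∀ t > (0:ℝ), p - 1 ≤ t * g' t / g t ∧ t * g' t / g t ≤ q - 1)


open MeasureTheory

open Set Filter Topology
open scoped RealInnerProductSpace

namespace IsDensitySC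

variable {g g' : ℝ → ℝ} {p q : ℝ}

theorem apply_zero (hg : IsDensitySC g g' p q) : g 0 = 0 := hg.1

theorem pos (hg : IsDensitySC g g' p q) {t : ℝ} (ht : 0 < t) : 0 < g t := hg.2.1 t ht

theorem hasDerivAt (hg : IsDensitySC g g' p q) {t : ℝ} (ht : 0 < t) : HasDerivAt g (g' t) t :=
  hg.2.2.1 t ht

theorem nonneg (hg : IsDensitySC g g' p q) {t : ℝ} (ht : 0 ≤ t) : 0 ≤ g t := by
  rcases ht.eq_or_lt with rfl | ht
  · exact hg.apply_zero.ge
  · exact (hg.pos ht).le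

theorem sub_one_mul_le_mul_deriv (hg : IsDensitySC g g' p q) {t : ℝ} (ht : 0 < t) :
    (p - 1) * g t ≤ t * g' t := by
  have hgt := hg.pos ht
  have := mul_le_mul_of_nonneg_right (hg.2.2.2.2 t ht).1 hgt.le
  rwa [div_mul_cancel₀ _ hgt.ne'] at this

theorem monotoneOn_div_rpow (hg : IsDensitySC g g' p q) :
    MonotoneOn (fun t => g t / t ^ (p - 1)) (Ioi 0) := by
  have hd : ∀ x ∈ Ioi (0 : ℝ), HasDerivAt (fun t => g t / t ^ (p - 1))
      ((g' x * x ^ (p - 1) - g x * ((p - 1) * x ^ (p - 1 - 1))) / (x ^ (p - 1)) ^ 2) x :=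
    fun x hx => (hg.hasDerivAt hx).div (Real.hasDerivAt_rpow_const (Or.inl hx.ne'))
      (Real.rpow_pos_of_pos hx _).ne'
  refine monotoneOn_of_hasDerivWithinAt_nonneg (convex_Ioi 0)
    (fun x hx => (hd x hx).continuousAt.continuousWithinAt)
    (fun x hx => (hd x (interior_subset hx)).hasDerivWithinAt) fun x hx => ?_
  rw [interior_Ioi, mem_Ioi] at hx
  have hxp : 0 < x ^ (p - 1 - 1) := Real.rpow_pos_of_pos hx _
  have hsplit : x ^ (p - 1) = x * x ^ (p - 1 - 1) := by
    rw [Real.rpow_sub_one hx.ne' (p - 1), mul_div_cancel₀ _ hx.ne']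
  have key := hg.sub_one_mul_le_mul_deriv hx
  apply div_nonneg _ (sq_nonneg _)
  rw [hsplit]
  nlinarith [mul_le_mul_of_nonneg_right key hxp.le]

theorem continuousOn_Ici (hg : IsDensitySC g g' p q) (hp : 1 < p) : ContinuousOn g (Ici 0) := by
  intro t ht
  rcases (mem_Ici.1 ht).eq_or_lt with rfl | ht
  · have hbound : ∀ s ∈ Ioc (0 : ℝ) 1, g s ≤ g 1 * s ^ (p - 1) := fun s hs => by
      have := hg.monotoneOn_div_rpow hs.1 (mem_Ioi.2 one_pos) hs.2
      dsimp only at this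
      rwa [Real.one_rpow, div_one, div_le_iff₀ (Real.rpow_pos_of_pos hs.1 _)] at this
    have hpow : Tendsto (fun s : ℝ => g 1 * s ^ (p - 1)) (𝓝 0) (𝓝 0) := by
      have := (Real.continuousAt_rpow_const 0 (p - 1) (Or.inr (by linarith))).tendsto.const_mul
        (g 1)
      rwa [Real.zero_rpow (by linarith), mul_zero] at this
    rw [← continuousWithinAt_Ioi_iff_Ici, ContinuousWithinAt, hg.apply_zero]
    refine tendsto_of_tendsto_of_tendsto_of_le_of_le' tendsto_const_nhds
      (hpow.mono_left nhdsWithin_le_nhds) ?_ ?_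
    · filter_upwards [self_mem_nhdsWithin] with s hs using hg.nonneg (le_of_lt hs)
    · filter_upwards [Ioc_mem_nhdsGT one_pos] with s hs using hbound s hs
  · exact (hg.hasDerivAt ht).continuousAt.continuousWithinAt

end IsDensitySC

theorem intervalIntegrable_deriv_of_nonneg_off_point {f f' : ℝ → ℝ} {a b c : ℝ} (hab : a ≤ b)
    (hf : ContinuousOn f (Icc a b)) (hd : ∀ x ∈ Ioo a b \ {c}, HasDerivAt f (f' x) x)
    (hpos : ∀ x ∈ Ioo a b \ {c}, 0 ≤ f' x) : IntervalIntegrable f' volume a b := by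
  set d := max a (min b c)
  have had : a ≤ d := le_max_left _ _
  have hdb : d ≤ b := max_le hab (min_le_left _ _)
  have hleft : Ioo a d ⊆ Ioo a b \ {c} := fun x hx =>
    ⟨⟨hx.1, hx.2.trans_le hdb⟩, fun hxc => by
      rw [mem_singleton_iff.1 hxc] at hx
      exact (lt_max_iff.1 hx.2).elim hx.1.asymm fun h => (min_le_right b c).not_gt h⟩
  have hright : Ioo d b ⊆ Ioo a b \ {c} := fun x hx =>
    ⟨⟨had.trans_lt hx.1, hx.2⟩, fun hxc => by
      rw [mem_singleton_iff.1 hxc] at hx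
      exact (max_lt_iff.1 hx.1).2.not_ge (le_min hx.2.le le_rfl)⟩
  have hint : ∀ {u w : ℝ}, a ≤ u → u ≤ w → w ≤ b → Ioo u w ⊆ Ioo a b \ {c} →
      IntervalIntegrable f' volume u w := fun hau huw hwb hsub =>
    (intervalIntegrable_iff_integrableOn_Ioc_of_le huw).2 <|
      intervalIntegral.integrableOn_deriv_of_nonneg (hf.mono (Icc_subset_Icc hau hwb))
        (fun x hx => hd x (hsub hx)) fun x hx => hpos x (hsub hx)
  exact (hint le_rfl had hdb hleft).trans (hint had hdb le_rfl hright)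

section

variable {E : Type*} [NormedAddCommGroup E] [InnerProductSpace ℝ E]

/-- At `x = 0` the junk value `0 / 0 = 0` gives `radialField g 0 = 0`. -/
noncomputable def radialField (g : ℝ → ℝ) (x : E) : E := (g ‖x‖ / ‖x‖) • x

/-- `⟪Da(x) v, v⟫` for `a = radialField g`, with `g'` in place of the derivative of `g`. -/
noncomputable def radialFieldQuad (g g' : ℝ → ℝ) (x v : E) : ℝ :=
  g' ‖x‖ * (⟪x, v⟫ / ‖x‖) ^ 2 + g ‖x‖ / ‖x‖ * (‖v‖ ^ 2 - (⟪x, v⟫ / ‖x‖) ^ 2)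

theorem norm_radialField {g : ℝ → ℝ} (h0 : g 0 = 0) (x : E) : ‖radialField g x‖ = |g ‖x‖| := by
  rcases eq_or_ne x 0 with rfl | hx
  · simp [radialField, h0]
  · rw [radialField, norm_smul, Real.norm_eq_abs, abs_div, abs_norm,
      div_mul_cancel₀ _ (norm_ne_zero_iff.2 hx)]

theorem continuous_radialField {g : ℝ → ℝ} (hg : ContinuousOn g (Ici 0)) (h0 : g 0 = 0) :
    Continuous (radialField g : E → E) := by
  have hgn : Continuous fun x : E => g ‖x‖ :=
    hg.comp_continuous continuous_norm fun x => norm_nonneg x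
  refine continuous_iff_continuousAt.2 fun x => ?_
  rcases eq_or_ne x 0 with rfl | hx
  · have h00 : radialField g (0 : E) = 0 := by simp [radialField]
    rw [ContinuousAt, h00, tendsto_zero_iff_norm_tendsto_zero]
    simp_rw [norm_radialField h0]
    simpa [h0] using (hgn.tendsto 0).abs
  · exact (hgn.continuousAt.div continuous_norm.continuousAt (norm_ne_zero_iff.2 hx)).smul
      continuousAt_id

theorem hasDerivAt_inner_radialField {g g' : ℝ → ℝ} {γ : ℝ → E} {v : E} {t : ℝ}
    (hγ : HasDerivAt γ v t) (h0 : γ t ≠ 0) (hg : HasDerivAt g (g' ‖γ t‖) ‖γ t‖) :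
    HasDerivAt (fun s => ⟪radialField g (γ s), v⟫) (radialFieldQuad g g' (γ t) v) t := by
  have hr : 0 < ‖γ t‖ := norm_pos_iff.2 h0
  have hnorm : HasDerivAt (fun s => ‖γ s‖) (⟪γ t, v⟫ / ‖γ t‖) t := by
    have := hγ.norm_sq.sqrt (by positivity)
    simp only [Real.sqrt_sq (norm_nonneg _)] at this
    convert this using 1
    field_simp
  have hinner : HasDerivAt (fun s => ⟪γ s, v⟫) (‖v‖ ^ 2) t := by
    simpa [real_inner_self_eq_norm_sq] using hγ.inner ℝ (hasDerivAt_const t v)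
  have := ((hg.comp t hnorm).div hnorm hr.ne').mul hinner
  simp only [radialField, real_inner_smul_left]
  refine this.congr_deriv ?_
  simp only [radialFieldQuad, Function.comp, Pi.div_apply]
  field_simp
  ring

theorem hasDerivAt_segment (ξ η : E) (t : ℝ) :
    HasDerivAt (fun s : ℝ => s • ξ + (1 - s) • η) (ξ - η) t := by
  refine (((hasDerivAt_id' t).smul_const ξ).fun_add
    (((hasDerivAt_id' t).const_sub 1).smul_const η)).congr_deriv ?_
  simp [sub_eq_add_neg]

theorem exists_forall_ne_segment_ne_zero {ξ η : E} (hne : ξ ≠ η) :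
    ∃ c : ℝ, ∀ t ≠ c, t • ξ + (1 - t) • η ≠ 0 := by
  by_cases h : ∃ c : ℝ, c • ξ + (1 - c) • η = 0
  · obtain ⟨c, hc⟩ := h
    refine ⟨c, fun t htc ht => htc ?_⟩
    have : (t - c) • (ξ - η) = 0 := by
      rw [← sub_eq_zero.2 (ht.trans hc.symm)]; module
    simpa [sub_eq_zero, hne] using this
  · push Not at h
    exact ⟨0, fun t _ => h t⟩

theorem IsDensitySC.min_mul_le_radialFieldQuad {g g' : ℝ → ℝ} {p q : ℝ}
    (hg : IsDensitySC g g' p q) {x : E} (hx : x ≠ 0) (v : E) :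
    min 1 (p - 1) * ‖v‖ ^ 2 * (g ‖x‖ / ‖x‖) ≤ radialFieldQuad g g' x v := by
  set r := ‖x‖
  set u := ⟪x, v⟫ / r
  have hr : 0 < r := norm_pos_iff.2 hx
  have hu : u ^ 2 ≤ ‖v‖ ^ 2 := by
    rw [div_pow, div_le_iff₀ (by positivity), ← mul_pow, ← sq_abs]
    exact pow_le_pow_left₀ (abs_nonneg _) ((abs_real_inner_le_norm x v).trans_eq (mul_comm _ _)) 2
  have hφ : 0 ≤ g r / r := div_nonneg (hg.nonneg hr.le) hr.le
  have hg' : min 1 (p - 1) * (g r / r) ≤ g' r := by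
    rw [← mul_div_assoc, div_le_iff₀ hr, mul_comm (g' r)]
    exact (mul_le_mul_of_nonneg_right (min_le_right _ _) (hg.nonneg hr.le)).trans
      (hg.sub_one_mul_le_mul_deriv hr)
  calc min 1 (p - 1) * ‖v‖ ^ 2 * (g r / r)
      = min 1 (p - 1) * (g r / r) * u ^ 2 + min 1 (p - 1) * (g r / r * (‖v‖ ^ 2 - u ^ 2)) := by
        ring
    _ ≤ g' r * u ^ 2 + g r / r * (‖v‖ ^ 2 - u ^ 2) :=
        add_le_add (mul_le_mul_of_nonneg_right hg' (sq_nonneg u))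
          (mul_le_of_le_one_left (mul_nonneg hφ (sub_nonneg.2 hu)) (min_le_left _ _))

theorem IsDensitySC.integral_le_inner_radialField_sub {g g' : ℝ → ℝ} {p q : ℝ}
    (hg : IsDensitySC g g' p q) (hp : 1 < p) {ξ η : E} (hne : ξ ≠ η) :
    IntervalIntegrable (fun t : ℝ => g ‖t • ξ + (1 - t) • η‖ / ‖t • ξ + (1 - t) • η‖) volume 0 1 ∧
      min 1 (p - 1) * ‖ξ - η‖ ^ 2 *
          (∫ t in (0 : ℝ)..1, g ‖t • ξ + (1 - t) • η‖ / ‖t • ξ + (1 - t) • η‖)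
        ≤ ⟪radialField g ξ - radialField g η, ξ - η⟫ := by
  set γ : ℝ → E := fun t => t • ξ + (1 - t) • η
  set h : ℝ → ℝ := fun t => g ‖γ t‖ / ‖γ t‖
  set F : ℝ → ℝ := fun t => ⟪radialField g (γ t), ξ - η⟫
  set F' : ℝ → ℝ := fun t => radialFieldQuad g g' (γ t) (ξ - η)
  set m := min 1 (p - 1) * ‖ξ - η‖ ^ 2
  have hm : 0 < m :=
    mul_pos (lt_min one_pos (sub_pos.2 hp)) (pow_pos (norm_pos_iff.2 (sub_ne_zero.2 hne)) 2)
  obtain ⟨c, hc⟩ := exists_forall_ne_segment_ne_zero hne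
  have hF : ∀ t ≠ c, HasDerivAt F (F' t) t := fun t ht =>
    hasDerivAt_inner_radialField (hasDerivAt_segment ξ η t) (hc t ht)
      (hg.hasDerivAt (norm_pos_iff.2 (hc t ht)))
  have hmF : ∀ t ≠ c, m * h t ≤ F' t := fun t ht => hg.min_mul_le_radialFieldQuad (hc t ht) _
  have hh : ∀ t, 0 ≤ h t := fun t => div_nonneg (hg.nonneg (norm_nonneg _)) (norm_nonneg _)
  have hgc := hg.continuousOn_Ici hp
  have hFc : Continuous F :=
    ((continuous_radialField hgc hg.apply_zero).comp (by fun_prop)).inner continuous_const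
  have hF'int : IntervalIntegrable F' volume 0 1 :=
    intervalIntegrable_deriv_of_nonneg_off_point zero_le_one hFc.continuousOn
      (fun t ht => hF t ht.2) fun t ht => (mul_nonneg hm.le (hh t)).trans (hmF t ht.2)
  have hFTC : ∫ t in (0 : ℝ)..1, F' t = F 1 - F 0 :=
    integral_eq_of_hasDerivAt_off_countable_of_le F F' zero_le_one (countable_singleton c)
      hFc.continuousOn (fun t ht => hF t ht.2) hF'int
  have hle : ∀ᵐ t, m * h t ≤ F' t := (volume.ae_ne c).mono hmF
  have hhint : IntervalIntegrable h volume 0 1 := by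
    refine (hF'int.const_mul m⁻¹).mono_fun' ?_ (ae_restrict_of_ae (hle.mono fun t ht => ?_))
    · exact ((hgc.comp_continuous (by fun_prop) fun t => norm_nonneg _).measurable.div
        (by fun_prop : Continuous fun t => ‖γ t‖).measurable).aestronglyMeasurable
    · dsimp only
      rwa [Real.norm_of_nonneg (hh t), le_inv_mul_iff₀ hm]
  refine ⟨hhint, ?_⟩
  calc m * ∫ t in (0 : ℝ)..1, h t = ∫ t in (0 : ℝ)..1, m * h t :=
        (intervalIntegral.integral_const_mul _ _).symm
    _ ≤ ∫ t in (0 : ℝ)..1, F' t :=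
        intervalIntegral.integral_mono_ae zero_le_one (hhint.const_mul m) hF'int hle
    _ = ⟪radialField g ξ - radialField g η, ξ - η⟫ := by
        simp [hFTC, F, γ, inner_sub_left]

end

theorem stmt_15_general (g g' : ℝ → ℝ) (g₀ gS : ℝ) (hg₀ : 1 < g₀)
    (hg : IsDensitySC g g' g₀ gS) (N : ℕ)
    (a : EuclideanSpace ℝ (Fin N) → EuclideanSpace ℝ (Fin N))
    (ha : ∀ ξ, a ξ = (g ‖ξ‖ / ‖ξ‖) • ξ)
    (ξ η : EuclideanSpace ℝ (Fin N)) (hne : ξ ≠ η) :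
    IntervalIntegrable
        (fun t : ℝ => g ‖t • ξ + (1 - t) • η‖ / ‖t • ξ + (1 - t) • η‖)
        volume 0 1 ∧
      min 1 (g₀ - 1) * ‖ξ - η‖ ^ 2 *
          (∫ t in (0:ℝ)..1, g ‖t • ξ + (1 - t) • η‖ / ‖t • ξ + (1 - t) • η‖)
        ≤ (inner ℝ (a ξ - a η) (ξ - η) : ℝ) := by
  obtain rfl : a = radialField g := funext ha
  exact hg.integral_le_inner_radialField_sub hg₀ hne

/-- strong monotonicity inequality for
`a(ξ) = (g(‖ξ‖)/‖ξ‖)·ξ` (with `a(0) = 0`): for `ξ ≠ η` and `θ_t = tξ + (1−t)η`,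
the function `t ↦ g(‖θ_t‖)/‖θ_t‖` is integrable on `[0,1]` and
`⟨a(ξ) − a(η), ξ − η⟩ ≥ min(1, g₀−1)·‖ξ − η‖²·∫₀¹ g(‖θ_t‖)/‖θ_t‖ dt`. -/
theorem stmt_15 (g g' : ℝ → ℝ) (g₀ gS : ℝ) (hg₀ : 1 < g₀) (hle : g₀ ≤ gS)
    (hg : IsDensitySC g g' g₀ gS) (N : ℕ) (hN : 1 ≤ N)
    (a : EuclideanSpace ℝ (Fin N) → EuclideanSpace ℝ (Fin N))
    (ha : ∀ ξ, a ξ = (g ‖ξ‖ / ‖ξ‖) • ξ)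
    (ξ η : EuclideanSpace ℝ (Fin N)) (hne : ξ ≠ η) :
    IntervalIntegrable
        (fun t : ℝ => g ‖t • ξ + (1 - t) • η‖ / ‖t • ξ + (1 - t) • η‖)
        volume 0 1 ∧
      min 1 (g₀ - 1) * ‖ξ - η‖ ^ 2 *
          (∫ t in (0:ℝ)..1, g ‖t • ξ + (1 - t) • η‖ / ‖t • ξ + (1 - t) • η‖)
        ≤ (inner ℝ (a ξ - a η) (ξ - η) : ℝ) :=
  stmt_15_general g g' g₀ gS hg₀ hg N a ha ξ η hne
end
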